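/- Let m > 0, γ̄ > 0 and γ_th > 0. Let γ be Gamma-distributed with shape m and rate m/γ̄ (Nakagami-m fading), i.e. with density x ↦ (m/γ̄)^{m} x^{m−1} e^{−m x/γ̄} / Γ(m) on (0,∞). Then the outage probability obtained from the analytically continued average channel capacity satisfies 1 − (1/π) ∫₀^∞ Im(Log(1 − x/γ_th)) · (m/γ̄)^{m} x^{m−1} e^{−m x/γ̄} / Γ(m) dx = 1 − Γ(m, m γ_th/γ̄)/Γ(m), where Log is the principal branch of the complex logarithm (imaginary part in (−π, π], equal to π on negative reals) and Γ(m, y) = ∫_y^∞ t^{m−1} e^{−t} dt is the upper incomplete Gamma function; i.e., P_out(γ̄; γ_th) = 1 − Γ(m, m γ_th/γ̄)/Γ(m). -/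

import Mathlib

/-! On the real axis the principal logarithm has imaginary part `π` exactly where `1 - x/γ_th`
is negative, i.e. for `x > γ_th`, and `0` elsewhere. Averaging it against the SNR density
therefore gives `π` times the tail probability `P(γ > γ_th)`, and for a Gamma law that tail is
`Γ(m, mγ_th/γ̄)/Γ(m)` after the substitution `t = mx/γ̄`. -/

open MeasureTheory Real

noncomputable def upperIncGamma (m y : ℝ) : ℝ :=
  ∫ t in Set.Ioi y, t ^ (m - 1) * Real.exp (-t)

theorem Complex.log_ofReal_im (y : ℝ) :
    (Complex.log y).im = (Set.Iio 0).indicator (fun _ => π) y := by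
  rw [Complex.log_im]
  rcases lt_or_ge y 0 with hy | hy
  · rw [Set.indicator_of_mem (Set.mem_Iio.mpr hy), Complex.arg_ofReal_of_neg hy]
  · rw [Set.indicator_of_notMem (Set.notMem_Iio.mpr hy), Complex.arg_ofReal_of_nonneg hy]

theorem Complex.log_one_sub_ofReal_div_im {θ : ℝ} (hθ : 0 < θ) (x : ℝ) :
    (Complex.log (1 - (x : ℂ) / (θ : ℂ))).im = (Set.Ioi θ).indicator (fun _ => π) x := by
  have hcast : (1 : ℂ) - (x : ℂ) / (θ : ℂ) = ((1 - x / θ : ℝ) : ℂ) := by push_cast; ring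
  have hneg : 1 - x / θ < 0 ↔ θ < x := by rw [sub_neg, one_lt_div hθ]
  rw [hcast, Complex.log_ofReal_im]
  simp only [Set.indicator, Set.mem_Iio, Set.mem_Ioi, hneg]

theorem setIntegral_Ioi_log_one_sub_div_im_mul {θ : ℝ} (hθ : 0 < θ) (f : ℝ → ℝ) :
    ∫ x in Set.Ioi (0 : ℝ), (Complex.log (1 - (x : ℂ) / (θ : ℂ))).im * f x
      = π * ∫ x in Set.Ioi θ, f x := by
  have hintegrand : ∀ x : ℝ, (Complex.log (1 - (x : ℂ) / (θ : ℂ))).im * f x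
      = (Set.Ioi θ).indicator (fun x => π * f x) x := by
    intro x
    rw [Complex.log_one_sub_ofReal_div_im hθ, Set.indicator_mul_left]
  simp_rw [hintegrand]
  rw [setIntegral_indicator measurableSet_Ioi, Set.Ioi_inter_Ioi, max_eq_right hθ.le,
    integral_const_mul]

theorem setIntegral_Ioi_rpow_mul_exp_neg_mul {c y : ℝ} (hc : 0 < c) (hy : 0 ≤ y) (m : ℝ) :
    ∫ x in Set.Ioi y, c ^ m * x ^ (m - 1) * exp (-(c * x)) = upperIncGamma m (c * y) := by
  have hintegrand : ∀ x ∈ Set.Ioi y,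
      c ^ m * x ^ (m - 1) * exp (-(c * x)) = c * ((c * x) ^ (m - 1) * exp (-(c * x))) := by
    intro x hx
    rw [mul_rpow hc.le (hy.trans (le_of_lt hx)), rpow_sub_one hc.ne']
    field_simp
  rw [setIntegral_congr_fun measurableSet_Ioi hintegrand, integral_const_mul, ← smul_eq_mul,
    integral_comp_mul_left_Ioi' (fun t => t ^ (m - 1) * exp (-t)) y hc, upperIncGamma]

/-- **Outage probability over Nakagami-m fading channels via the
analytically continued average channel capacity.**  For `m, γ̄, γ_th > 0` and
a Gamma-distributed SNR with shape `m` and rate `m/γ̄`,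
`1 − (1/π) ∫₀^∞ Im(Log(1 − x/γ_th)) (m/γ̄)^m x^{m−1} e^{−mx/γ̄}/Γ(m) dx
  = 1 − Γ(m, mγ_th/γ̄)/Γ(m)`,
where `Log` is the principal branch of the complex logarithm. -/
theorem outage_probability_nakagami
    (m γbar γth : ℝ) (hm : 0 < m) (hγ : 0 < γbar) (hth : 0 < γth) :
    1 - (1 / π) *
        ∫ x in Set.Ioi (0 : ℝ),
          (Complex.log (1 - (x : ℂ) / (γth : ℂ))).im *
            ((m / γbar) ^ m * x ^ (m - 1) * Real.exp (-(m * x / γbar)) /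
              Real.Gamma m)
      = 1 - upperIncGamma m (m * γth / γbar) / Real.Gamma m := by
  have hrate : ∀ x, m * x / γbar = m / γbar * x := fun x => by ring
  have htail : ∫ x in Set.Ioi γth, (m / γbar) ^ m * x ^ (m - 1) * exp (-(m * x / γbar))
      = upperIncGamma m (m * γth / γbar) := by
    simp_rw [hrate]
    exact setIntegral_Ioi_rpow_mul_exp_neg_mul (div_pos hm hγ) hth.le m
  rw [setIntegral_Ioi_log_one_sub_div_im_mul hth, integral_div, htail]
  field_simp
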